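/- Let $R$ be a commutative associative unital $\mathbb{C}$-algebra generated by elements $w, E, H, F$ subject to the relations $E^2 = F^2 = H E = H F = 0$, $2H^2 = -E F = \tfrac{16}{9} w^3$, and $w^2 E = w^2 H = w^2 F = 0$. Then $w^5 = 0$, and $R$ is spanned as a vector space by the eleven elements $1, w, w^2, w^3, w^4, E, wE, H, wH, F, wF$; in particular $\dim_{\mathbb{C}} R \le 11$. -/
import Mathlib

/-- If a commutative associative unital ℂ-algebra `R` is generated by `w, E, H, F` subject to
`E² = F² = HE = HF = 0`, `2H² = -EF = (16/9)w³`, and `w²E = w²H = w²F = 0`, then `w⁵ = 0`,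
`R` is spanned by the eleven elements `1, w, w², w³, w⁴, E, wE, H, wH, F, wF`, and
`dim_ℂ R ≤ 11`. -/
theorem stmt_3 {R : Type*} [CommRing R] [Algebra ℂ R] (w E H F : R)
    (hgen : Algebra.adjoin ℂ ({w, E, H, F} : Set R) = ⊤)
    (hE2 : E ^ 2 = 0) (hF2 : F ^ 2 = 0) (hHE : H * E = 0) (hHF : H * F = 0)
    (hH2 : 2 * H ^ 2 = (16/9 : ℂ) • w ^ 3)
    (hEF : -(E * F) = (16/9 : ℂ) • w ^ 3)
    (hw2E : w ^ 2 * E = 0) (hw2H : w ^ 2 * H = 0) (hw2F : w ^ 2 * F = 0) :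
    w ^ 5 = 0 ∧
    Submodule.span ℂ
      ({1, w, w ^ 2, w ^ 3, w ^ 4, E, w * E, H, w * H, F, w * F} : Set R) = ⊤ ∧
    Module.finrank ℂ R ≤ 11 := by
  -- w^5 = 0
  have hw5 : w ^ 5 = 0 := by
    have h : (16/9 : ℂ) • w ^ 5 = 0 := by
      calc (16/9 : ℂ) • w ^ 5 = w ^ 2 * ((16/9 : ℂ) • w ^ 3) := by
            rw [mul_smul_comm]; ring_nf
        _ = w ^ 2 * (2 * H ^ 2) := by rw [hH2]
        _ = 2 * H * (w ^ 2 * H) := by ring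
        _ = 0 := by rw [hw2H, mul_zero]
    have h2 := congrArg (fun x => (9/16 : ℂ) • x) h
    simp only [smul_smul, smul_zero] at h2
    norm_num at h2
    exact h2
  set s : Set R := {1, w, w ^ 2, w ^ 3, w ^ 4, E, w * E, H, w * H, F, w * F} with hs
  set S : Submodule ℂ R := Submodule.span ℂ s with hS
  have mem0 : (1:R) ∈ S := Submodule.subset_span (by simp [hs])
  have mem1 : w ∈ S := Submodule.subset_span (by simp [hs])
  have mem2 : w ^ 2 ∈ S := Submodule.subset_span (by simp [hs])
  have mem3 : w ^ 3 ∈ S := Submodule.subset_span (by simp [hs])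
  have mem4 : w ^ 4 ∈ S := Submodule.subset_span (by simp [hs])
  have mem5 : E ∈ S := Submodule.subset_span (by simp [hs])
  have mem6 : w * E ∈ S := Submodule.subset_span (by simp [hs])
  have mem7 : H ∈ S := Submodule.subset_span (by simp [hs])
  have mem8 : w * H ∈ S := Submodule.subset_span (by simp [hs])
  have mem9 : F ∈ S := Submodule.subset_span (by simp [hs])
  have mem10 : w * F ∈ S := Submodule.subset_span (by simp [hs])
  have hEF' : E * F = (-(16/9) : ℂ) • w ^ 3 := by
    rw [neg_smul, ← hEF, neg_neg]
  have hHH' : H * H = ((8/9) : ℂ) • w ^ 3 := by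
    have h2 : (2:R) * H ^ 2 = (2:ℂ) • H ^ 2 := by
      rw [Algebra.smul_def, map_ofNat]
    have h3 := congrArg (fun x => (1/2 : ℂ) • x) hH2
    simp only [h2, smul_smul] at h3
    norm_num at h3
    rw [← pow_two]
    exact h3
  have memEF : E * F ∈ S := by rw [hEF']; exact Submodule.smul_mem _ _ mem3
  have memEFw : w * (E * F) ∈ S := by
    rw [hEF', mul_smul_comm, show w * w ^ 3 = w ^ 4 by ring]
    exact Submodule.smul_mem _ _ mem4
  have memHH : H * H ∈ S := by rw [hHH']; exact Submodule.smul_mem _ _ mem3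
  have memHHw : w * (H * H) ∈ S := by
    rw [hHH', mul_smul_comm, show w * w ^ 3 = w ^ 4 by ring]
    exact Submodule.smul_mem _ _ mem4
  have key : ∀ m ∈ s, ∀ n ∈ s, m * n ∈ S := by
    intro m hm n hn
    simp only [hs, Set.mem_insert_iff, Set.mem_singleton_iff] at hm hn
    rcases hm with h1|h1|h1|h1|h1|h1|h1|h1|h1|h1|h1 <;>
      rcases hn with h2|h2|h2|h2|h2|h2|h2|h2|h2|h2|h2 <;> rw [h1, h2]
    · rw [show (1:R) * (1:R) = (1:R) by ring]; exact mem0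
    · rw [show (1:R) * w = w by ring]; exact mem1
    · rw [show (1:R) * w ^ 2 = w ^ 2 by ring]; exact mem2
    · rw [show (1:R) * w ^ 3 = w ^ 3 by ring]; exact mem3
    · rw [show (1:R) * w ^ 4 = w ^ 4 by ring]; exact mem4
    · rw [show (1:R) * E = E by ring]; exact mem5
    · rw [show (1:R) * (w * E) = w * E by ring]; exact mem6
    · rw [show (1:R) * H = H by ring]; exact mem7
    · rw [show (1:R) * (w * H) = w * H by ring]; exact mem8
    · rw [show (1:R) * F = F by ring]; exact mem9
    · rw [show (1:R) * (w * F) = w * F by ring]; exact mem10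
    · rw [show w * (1:R) = w by ring]; exact mem1
    · rw [show w * w = w ^ 2 by ring]; exact mem2
    · rw [show w * w ^ 2 = w ^ 3 by ring]; exact mem3
    · rw [show w * w ^ 3 = w ^ 4 by ring]; exact mem4
    · rw [show w * w ^ 4 = (0:R) by linear_combination hw5]; exact Submodule.zero_mem _
    · rw [show w * E = w * E by ring]; exact mem6
    · rw [show w * (w * E) = (0:R) by linear_combination hw2E]; exact Submodule.zero_mem _
    · rw [show w * H = w * H by ring]; exact mem8
    · rw [show w * (w * H) = (0:R) by linear_combination hw2H]; exact Submodule.zero_mem _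
    · rw [show w * F = w * F by ring]; exact mem10
    · rw [show w * (w * F) = (0:R) by linear_combination hw2F]; exact Submodule.zero_mem _
    · rw [show w ^ 2 * (1:R) = w ^ 2 by ring]; exact mem2
    · rw [show w ^ 2 * w = w ^ 3 by ring]; exact mem3
    · rw [show w ^ 2 * w ^ 2 = w ^ 4 by ring]; exact mem4
    · rw [show w ^ 2 * w ^ 3 = (0:R) by linear_combination hw5]; exact Submodule.zero_mem _
    · rw [show w ^ 2 * w ^ 4 = (0:R) by linear_combination w * hw5]; exact Submodule.zero_mem _
    · rw [show w ^ 2 * E = (0:R) by linear_combination hw2E]; exact Submodule.zero_mem _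
    · rw [show w ^ 2 * (w * E) = (0:R) by linear_combination w * hw2E]; exact Submodule.zero_mem _
    · rw [show w ^ 2 * H = (0:R) by linear_combination hw2H]; exact Submodule.zero_mem _
    · rw [show w ^ 2 * (w * H) = (0:R) by linear_combination w * hw2H]; exact Submodule.zero_mem _
    · rw [show w ^ 2 * F = (0:R) by linear_combination hw2F]; exact Submodule.zero_mem _
    · rw [show w ^ 2 * (w * F) = (0:R) by linear_combination w * hw2F]; exact Submodule.zero_mem _
    · rw [show w ^ 3 * (1:R) = w ^ 3 by ring]; exact mem3
    · rw [show w ^ 3 * w = w ^ 4 by ring]; exact mem4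
    · rw [show w ^ 3 * w ^ 2 = (0:R) by linear_combination hw5]; exact Submodule.zero_mem _
    · rw [show w ^ 3 * w ^ 3 = (0:R) by linear_combination w * hw5]; exact Submodule.zero_mem _
    · rw [show w ^ 3 * w ^ 4 = (0:R) by linear_combination w ^ 2 * hw5]; exact Submodule.zero_mem _
    · rw [show w ^ 3 * E = (0:R) by linear_combination w * hw2E]; exact Submodule.zero_mem _
    · rw [show w ^ 3 * (w * E) = (0:R) by linear_combination w ^ 2 * hw2E]; exact Submodule.zero_mem _
    · rw [show w ^ 3 * H = (0:R) by linear_combination w * hw2H]; exact Submodule.zero_mem _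
    · rw [show w ^ 3 * (w * H) = (0:R) by linear_combination w ^ 2 * hw2H]; exact Submodule.zero_mem _
    · rw [show w ^ 3 * F = (0:R) by linear_combination w * hw2F]; exact Submodule.zero_mem _
    · rw [show w ^ 3 * (w * F) = (0:R) by linear_combination w ^ 2 * hw2F]; exact Submodule.zero_mem _
    · rw [show w ^ 4 * (1:R) = w ^ 4 by ring]; exact mem4
    · rw [show w ^ 4 * w = (0:R) by linear_combination hw5]; exact Submodule.zero_mem _
    · rw [show w ^ 4 * w ^ 2 = (0:R) by linear_combination w * hw5]; exact Submodule.zero_mem _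
    · rw [show w ^ 4 * w ^ 3 = (0:R) by linear_combination w ^ 2 * hw5]; exact Submodule.zero_mem _
    · rw [show w ^ 4 * w ^ 4 = (0:R) by linear_combination w ^ 3 * hw5]; exact Submodule.zero_mem _
    · rw [show w ^ 4 * E = (0:R) by linear_combination w ^ 2 * hw2E]; exact Submodule.zero_mem _
    · rw [show w ^ 4 * (w * E) = (0:R) by linear_combination w ^ 3 * hw2E]; exact Submodule.zero_mem _
    · rw [show w ^ 4 * H = (0:R) by linear_combination w ^ 2 * hw2H]; exact Submodule.zero_mem _
    · rw [show w ^ 4 * (w * H) = (0:R) by linear_combination w ^ 3 * hw2H]; exact Submodule.zero_mem _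
    · rw [show w ^ 4 * F = (0:R) by linear_combination w ^ 2 * hw2F]; exact Submodule.zero_mem _
    · rw [show w ^ 4 * (w * F) = (0:R) by linear_combination w ^ 3 * hw2F]; exact Submodule.zero_mem _
    · rw [show E * (1:R) = E by ring]; exact mem5
    · rw [show E * w = w * E by ring]; exact mem6
    · rw [show E * w ^ 2 = (0:R) by linear_combination hw2E]; exact Submodule.zero_mem _
    · rw [show E * w ^ 3 = (0:R) by linear_combination w * hw2E]; exact Submodule.zero_mem _
    · rw [show E * w ^ 4 = (0:R) by linear_combination w ^ 2 * hw2E]; exact Submodule.zero_mem _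
    · rw [show E * E = (0:R) by linear_combination hE2]; exact Submodule.zero_mem _
    · rw [show E * (w * E) = (0:R) by linear_combination w * hE2]; exact Submodule.zero_mem _
    · rw [show E * H = (0:R) by linear_combination hHE]; exact Submodule.zero_mem _
    · rw [show E * (w * H) = (0:R) by linear_combination w * hHE]; exact Submodule.zero_mem _
    · exact memEF
    · rw [show E * (w * F) = w * (E * F) by ring]; exact memEFw
    · rw [show (w * E) * (1:R) = w * E by ring]; exact mem6
    · rw [show (w * E) * w = (0:R) by linear_combination hw2E]; exact Submodule.zero_mem _
    · rw [show (w * E) * w ^ 2 = (0:R) by linear_combination w * hw2E]; exact Submodule.zero_mem _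
    · rw [show (w * E) * w ^ 3 = (0:R) by linear_combination w ^ 2 * hw2E]; exact Submodule.zero_mem _
    · rw [show (w * E) * w ^ 4 = (0:R) by linear_combination w ^ 3 * hw2E]; exact Submodule.zero_mem _
    · rw [show (w * E) * E = (0:R) by linear_combination w * hE2]; exact Submodule.zero_mem _
    · rw [show (w * E) * (w * E) = (0:R) by linear_combination w ^ 2 * hE2]; exact Submodule.zero_mem _
    · rw [show (w * E) * H = (0:R) by linear_combination w * hHE]; exact Submodule.zero_mem _
    · rw [show (w * E) * (w * H) = (0:R) by linear_combination w ^ 2 * hHE]; exact Submodule.zero_mem _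
    · rw [show (w * E) * F = w * (E * F) by ring]; exact memEFw
    · rw [show (w * E) * (w * F) = (0:R) by linear_combination F * hw2E]; exact Submodule.zero_mem _
    · rw [show H * (1:R) = H by ring]; exact mem7
    · rw [show H * w = w * H by ring]; exact mem8
    · rw [show H * w ^ 2 = (0:R) by linear_combination hw2H]; exact Submodule.zero_mem _
    · rw [show H * w ^ 3 = (0:R) by linear_combination w * hw2H]; exact Submodule.zero_mem _
    · rw [show H * w ^ 4 = (0:R) by linear_combination w ^ 2 * hw2H]; exact Submodule.zero_mem _
    · rw [show H * E = (0:R) by linear_combination hHE]; exact Submodule.zero_mem _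
    · rw [show H * (w * E) = (0:R) by linear_combination w * hHE]; exact Submodule.zero_mem _
    · exact memHH
    · rw [show H * (w * H) = w * (H * H) by ring]; exact memHHw
    · rw [show H * F = (0:R) by linear_combination hHF]; exact Submodule.zero_mem _
    · rw [show H * (w * F) = (0:R) by linear_combination w * hHF]; exact Submodule.zero_mem _
    · rw [show (w * H) * (1:R) = w * H by ring]; exact mem8
    · rw [show (w * H) * w = (0:R) by linear_combination hw2H]; exact Submodule.zero_mem _
    · rw [show (w * H) * w ^ 2 = (0:R) by linear_combination w * hw2H]; exact Submodule.zero_mem _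
    · rw [show (w * H) * w ^ 3 = (0:R) by linear_combination w ^ 2 * hw2H]; exact Submodule.zero_mem _
    · rw [show (w * H) * w ^ 4 = (0:R) by linear_combination w ^ 3 * hw2H]; exact Submodule.zero_mem _
    · rw [show (w * H) * E = (0:R) by linear_combination w * hHE]; exact Submodule.zero_mem _
    · rw [show (w * H) * (w * E) = (0:R) by linear_combination w ^ 2 * hHE]; exact Submodule.zero_mem _
    · rw [show (w * H) * H = w * (H * H) by ring]; exact memHHw
    · rw [show (w * H) * (w * H) = (0:R) by linear_combination H * hw2H]; exact Submodule.zero_mem _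
    · rw [show (w * H) * F = (0:R) by linear_combination w * hHF]; exact Submodule.zero_mem _
    · rw [show (w * H) * (w * F) = (0:R) by linear_combination w ^ 2 * hHF]; exact Submodule.zero_mem _
    · rw [show F * (1:R) = F by ring]; exact mem9
    · rw [show F * w = w * F by ring]; exact mem10
    · rw [show F * w ^ 2 = (0:R) by linear_combination hw2F]; exact Submodule.zero_mem _
    · rw [show F * w ^ 3 = (0:R) by linear_combination w * hw2F]; exact Submodule.zero_mem _
    · rw [show F * w ^ 4 = (0:R) by linear_combination w ^ 2 * hw2F]; exact Submodule.zero_mem _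
    · rw [show F * E = E * F by ring]; exact memEF
    · rw [show F * (w * E) = w * (E * F) by ring]; exact memEFw
    · rw [show F * H = (0:R) by linear_combination hHF]; exact Submodule.zero_mem _
    · rw [show F * (w * H) = (0:R) by linear_combination w * hHF]; exact Submodule.zero_mem _
    · rw [show F * F = (0:R) by linear_combination hF2]; exact Submodule.zero_mem _
    · rw [show F * (w * F) = (0:R) by linear_combination w * hF2]; exact Submodule.zero_mem _
    · rw [show (w * F) * (1:R) = w * F by ring]; exact mem10
    · rw [show (w * F) * w = (0:R) by linear_combination hw2F]; exact Submodule.zero_mem _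
    · rw [show (w * F) * w ^ 2 = (0:R) by linear_combination w * hw2F]; exact Submodule.zero_mem _
    · rw [show (w * F) * w ^ 3 = (0:R) by linear_combination w ^ 2 * hw2F]; exact Submodule.zero_mem _
    · rw [show (w * F) * w ^ 4 = (0:R) by linear_combination w ^ 3 * hw2F]; exact Submodule.zero_mem _
    · rw [show (w * F) * E = w * (E * F) by ring]; exact memEFw
    · rw [show (w * F) * (w * E) = (0:R) by linear_combination F * hw2E]; exact Submodule.zero_mem _
    · rw [show (w * F) * H = (0:R) by linear_combination w * hHF]; exact Submodule.zero_mem _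
    · rw [show (w * F) * (w * H) = (0:R) by linear_combination w ^ 2 * hHF]; exact Submodule.zero_mem _
    · rw [show (w * F) * F = (0:R) by linear_combination w * hF2]; exact Submodule.zero_mem _
    · rw [show (w * F) * (w * F) = (0:R) by linear_combination w ^ 2 * hF2]; exact Submodule.zero_mem _
  have hmul : ∀ x y : R, x ∈ S → y ∈ S → x * y ∈ S := by
    intro x y hx hy
    have hle : S * S ≤ S := by
      rw [hS, Submodule.span_mul_span]
      refine Submodule.span_le.mpr ?_
      rintro z ⟨m, hm, n, hn, rfl⟩
      exact key m hm n hn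
    exact hle (Submodule.mul_mem_mul hx hy)
  have hadj : Algebra.adjoin ℂ ({w, E, H, F} : Set R) ≤ S.toSubalgebra mem0 hmul := by
    refine Algebra.adjoin_le ?_
    intro x hx
    simp only [Set.mem_insert_iff, Set.mem_singleton_iff] at hx
    rcases hx with rfl|rfl|rfl|rfl
    · exact mem1
    · exact mem5
    · exact mem7
    · exact mem9
  have hSpan : S = ⊤ := by
    rw [eq_top_iff]
    intro x _
    have htop : (⊤ : Subalgebra ℂ R) ≤ S.toSubalgebra mem0 hmul := hgen ▸ hadj
    exact Submodule.mem_toSubalgebra.mp (htop trivial)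
  refine ⟨hw5, hSpan, ?_⟩
  have hv : Submodule.span ℂ (Set.range
      ![(1:R), w, w ^ 2, w ^ 3, w ^ 4, E, w * E, H, w * H, F, w * F]) = ⊤ := by
    have hr : Set.range ![(1:R), w, w ^ 2, w ^ 3, w ^ 4, E, w * E, H, w * H, F, w * F] = s := by
      rw [hs]
      simp only [Matrix.range_cons, Matrix.range_empty, Set.union_empty,
        Set.singleton_union]
    rw [hr, ← hS, hSpan]
  simpa using finrank_le_of_span_eq_top hv
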